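/- Let p be an odd prime, ζ = e^{2πi/p}, s = (p−1)/2, and let M(p) be the p×p complex matrix with (j,k)-entry ζ^{j(k−j)} (0 ≤ j,k ≤ p−1). Then a complex number λ is an eigenvalue of M(p) if and only if λ = ((−2)/p)·g(1;p)·ζ^{−s a²} for some a ∈ {0, 1, …, p−1}, where (·/p) is the Legendre symbol and g(1;p) = Σ_{k=0}^{p−1} e^{2πik²/p} is the quadratic Gauss sum mod p. Moreover, the number of distinct eigenvalues of M(p) is (p+1)/2. Explicitly, for each 0 ≤ a ≤ p−1 the vector v_a with k-entry ζ^{s(k−a)²} is an eigenvector of M(p) with eigenvalue g(s;p)·ζ^{−s a²}, where g(s;p) = Σ_{k=0}^{p−1} e^{2πisk²/p}. -/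

import Mathlib

open Finset Matrix

/-- The `p×p` complex matrix `M(p)` with `(j,k)`-entry `ζ^{j(k−j)}`, where
`ζ = e^{2πi/p}` and `0 ≤ j, k ≤ p−1`. -/
noncomputable def Mmat (p : ℕ) : Matrix (Fin p) (Fin p) ℂ :=
  fun j k => Complex.exp (2 * Real.pi * Complex.I / p) ^ ((j : ℤ) * ((k : ℤ) - (j : ℤ)))

/-- The quadratic Gauss sum mod `p`: `g(a;p) = ∑_{k=0}^{p−1} e^{2πiak²/p}`. -/
noncomputable def gaussSum' (p a : ℕ) : ℂ :=
  ∑ k ∈ Finset.range p, Complex.exp (2 * Real.pi * Complex.I * a * k ^ 2 / p)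

namespace MmatAux

noncomputable def ee (p : ℕ) : ℂ := Complex.exp (2 * Real.pi * Complex.I / p)

noncomputable def FF (p : ℕ) (n : ℤ) : ℂ := ee p ^ n

noncomputable def GG (p : ℕ) (x : ZMod p) : ℂ := ee p ^ x.val

variable {p : ℕ}

lemma ee_ne_zero : ee p ≠ 0 := Complex.exp_ne_zero _

lemma hprim (hp : p ≠ 0) : IsPrimitiveRoot (ee p) p := by
  simpa [ee, mul_div_assoc] using Complex.isPrimitiveRoot_exp p hp

lemma FF_add (m n : ℤ) : FF p (m + n) = FF p m * FF p n := zpow_add₀ ee_ne_zero m n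

lemma FF_cong (hp : p ≠ 0) {m n : ℤ} (h : (p : ℤ) ∣ m - n) : FF p m = FF p n := by
  obtain ⟨c, hc⟩ := h
  have hm : m = n + p * c := by linarith
  have hep : ee p ^ (p : ℤ) = 1 := by
    rw [zpow_natCast, (hprim hp).pow_eq_one]
  rw [hm, FF_add]
  simp only [FF]
  rw [_root_.zpow_mul, hep, _root_.one_zpow, mul_one]

lemma FF_natCast (n : ℕ) : FF p n = ee p ^ n := zpow_natCast _ n

lemma GG_natCast [NeZero p] (n : ℕ) : GG p (n : ZMod p) = FF p n := by
  have h : GG p (n : ZMod p) = FF p ((n % p : ℕ) : ℤ) := by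
    rw [GG, ZMod.val_natCast, FF_natCast]
  rw [h]
  refine FF_cong (NeZero.ne p) ?_
  refine ⟨-((n : ℤ) / p), ?_⟩
  push_cast
  rw [Int.emod_def]; ring

lemma GG_intCast [NeZero p] (n : ℤ) : GG p (n : ZMod p) = FF p n := by
  have h : GG p (n : ZMod p) = FF p ((n : ZMod p).val) := by
    rw [GG, FF_natCast]
  rw [h]
  refine FF_cong (NeZero.ne p) ?_
  have := ZMod.val_intCast (n := p) n
  refine ⟨-(n / p), ?_⟩
  rw [this, Int.emod_def]; ring

lemma GG_add [NeZero p] (x y : ZMod p) : GG p (x + y) = GG p x * GG p y := by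
  have hx : ((x.val : ℕ) : ZMod p) = x := ZMod.natCast_rightInverse x
  have hy : ((y.val : ℕ) : ZMod p) = y := ZMod.natCast_rightInverse y
  rw [← hx, ← hy, ← Nat.cast_add, GG_natCast, GG_natCast, GG_natCast]
  push_cast
  exact FF_add _ _

lemma GG_zero [NeZero p] : GG p (0 : ZMod p) = 1 := by
  rw [GG, ZMod.val_zero, pow_zero]

lemma GG_injective [NeZero p] : Function.Injective (GG p) := by
  intro x y h
  have := (hprim (NeZero.ne p)).pow_inj (ZMod.val_lt x) (ZMod.val_lt y) h
  exact ZMod.val_injective p this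


lemma sum_range_eq_sum_zmod [NeZero p] (f : ℕ → ℂ) :
    ∑ k ∈ Finset.range p, f k = ∑ x : ZMod p, f x.val := by
  refine Finset.sum_nbij' (fun k => (k : ZMod p)) (fun x => x.val)
    (fun _ _ => Finset.mem_univ _) (fun x _ => Finset.mem_range.mpr (ZMod.val_lt x))
    (fun k hk => ZMod.val_cast_of_lt (Finset.mem_range.mp hk))
    (fun x _ => ZMod.natCast_rightInverse x) ?_
  intro k hk
  rw [ZMod.val_cast_of_lt (Finset.mem_range.mp hk)]

lemma sum_GG [NeZero p] (hp : 1 < p) : ∑ x : ZMod p, GG p x = 0 := by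
  have : ∑ x : ZMod p, GG p x = ∑ k ∈ Finset.range p, ee p ^ k :=
    (sum_range_eq_sum_zmod (fun k => ee p ^ k)).symm
  rw [this, (hprim (NeZero.ne p)).geom_sum_eq_zero hp]

lemma sum_GG_mul [Fact p.Prime] (hp : 1 < p) {c : ZMod p} (hc : c ≠ 0) :
    ∑ x : ZMod p, GG p (c * x) = 0 := by
  rw [Fintype.sum_equiv (Equiv.mulLeft₀ c hc) (fun x => GG p (c * x)) (GG p) (fun x => rfl)]
  exact sum_GG hp


section prime
variable [Fact p.Prime] [NeZero p]

lemma sum_sq_eq (hodd : p ≠ 2) (f : ZMod p → ℂ) :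
    ∑ x : ZMod p, f (x ^ 2) = ∑ t : ZMod p, ((quadraticChar (ZMod p) t : ℂ) + 1) * f t := by
  rw [← Finset.sum_fiberwise' Finset.univ (fun x : ZMod p => x ^ 2) f]
  refine Finset.sum_congr rfl fun t _ => ?_
  rw [Finset.sum_const, nsmul_eq_mul]
  congr 1
  have hchar : ringChar (ZMod p) ≠ 2 := (ZMod.ringChar_zmod_n p).substr hodd
  have h := quadraticChar_card_sqrts hchar t
  have hset : {x : ZMod p | x ^ 2 = t}.toFinset
      = Finset.univ.filter (fun x => x ^ 2 = t) := Set.toFinset_setOf _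
  rw [hset] at h
  exact_mod_cast congrArg (Int.cast : ℤ → ℂ) h

noncomputable def gs (p : ℕ) [NeZero p] (u : ZMod p) : ℂ := ∑ x : ZMod p, GG p (u * x ^ 2)

lemma gs_eq_char_sum (hodd : p ≠ 2) {w : ZMod p} (hw : w ≠ 0) :
    gs p w = ∑ t : ZMod p, (quadraticChar (ZMod p) t : ℂ) * GG p (w * t) := by
  have hp1 : 1 < p := (Fact.out : p.Prime).one_lt
  rw [gs, sum_sq_eq hodd (fun y => GG p (w * y))]
  simp only [add_mul, one_mul]
  rw [Finset.sum_add_distrib, sum_GG_mul hp1 hw, add_zero]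

lemma quadChar_inv {u : ZMod p} (hu : u ≠ 0) :
    quadraticChar (ZMod p) u⁻¹ = quadraticChar (ZMod p) u := by
  have h2 : quadraticChar (ZMod p) u * quadraticChar (ZMod p) u⁻¹ = 1 := by
    rw [← _root_.map_mul, mul_inv_cancel₀ hu, _root_.map_one]
  have h3 : quadraticChar (ZMod p) u * quadraticChar (ZMod p) u = 1 := by
    rw [← pow_two]; exact quadraticChar_sq_one hu
  have hne : quadraticChar (ZMod p) u ≠ 0 := by
    intro h; rw [h, zero_mul] at h3; exact one_ne_zero h3.symm
  exact mul_left_cancel₀ hne (h2.trans h3.symm)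

lemma gs_shift (hodd : p ≠ 2) {u : ZMod p} (hu : u ≠ 0) :
    gs p u = (quadraticChar (ZMod p) u : ℂ) * gs p 1 := by
  rw [gs_eq_char_sum hodd hu, gs_eq_char_sum hodd (one_ne_zero), Finset.mul_sum]
  have step1 : ∑ t : ZMod p, (quadraticChar (ZMod p) t : ℂ) * GG p (u * t)
      = ∑ r : ZMod p, (quadraticChar (ZMod p) (u⁻¹ * r) : ℂ) * GG p r := by
    refine Fintype.sum_equiv (Equiv.mulLeft₀ u hu) _ _ ?_
    intro t
    show _ = (quadraticChar (ZMod p) (u⁻¹ * (u * t)) : ℂ) * GG p (u * t)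
    rw [inv_mul_cancel_left₀ hu]
  rw [step1]
  refine Finset.sum_congr rfl fun r _ => ?_
  rw [_root_.map_mul, quadChar_inv hu, one_mul]
  push_cast
  ring

lemma conj_ee : (starRingEnd ℂ) (ee p) = (ee p)⁻¹ := by
  rw [ee, ← Complex.exp_conj, ← Complex.exp_neg]
  congr 1
  simp [map_div₀, Complex.conj_I, map_ofNat]
  ring

lemma conj_GG (x : ZMod p) : (starRingEnd ℂ) (GG p x) = GG p (-x) := by
  have hx : ((x.val : ℕ) : ZMod p) = x := ZMod.natCast_rightInverse x
  have h1 : GG p (-x) = FF p (-(x.val : ℤ)) := by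
    rw [← GG_intCast]
    congr 1
    push_cast
    rw [hx]
  rw [h1, GG, map_pow, conj_ee, FF, _root_.zpow_neg, zpow_natCast, inv_pow]

lemma two_ne_zero' (hodd : p ≠ 2) : (2 : ZMod p) ≠ 0 := by
  intro h
  have := (ZMod.natCast_eq_zero_iff 2 p).mp (by exact_mod_cast h)
  rcases (Nat.prime_dvd_prime_iff_eq (Fact.out : p.Prime) Nat.prime_two).mp this with h'
  exact hodd h'

lemma gs_one_mul_conj (hodd : p ≠ 2) : gs p 1 * (starRingEnd ℂ) (gs p 1) = p := by
  have hp1 : 1 < p := (Fact.out : p.Prime).one_lt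
  have hNZ : NeZero p := ⟨(Fact.out : p.Prime).ne_zero⟩
  rw [gs, map_sum]
  rw [Finset.sum_mul_sum]
  have h1 : ∀ x y : ZMod p, GG p (1 * x ^ 2) * (starRingEnd ℂ) (GG p (1 * y ^ 2))
      = GG p (x ^ 2 - y ^ 2) := by
    intro x y
    rw [one_mul, one_mul, conj_GG, ← GG_add, sub_eq_add_neg]
  simp only [h1]
  rw [Finset.sum_comm]
  have h2 : ∀ y : ZMod p, ∑ x : ZMod p, GG p (x ^ 2 - y ^ 2)
      = ∑ d : ZMod p, GG p (d ^ 2) * GG p ((2 * d) * y) := by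
    intro y
    have := Fintype.sum_equiv (Equiv.addLeft y) (fun d => GG p ((y + d) ^ 2 - y ^ 2))
      (fun x => GG p (x ^ 2 - y ^ 2)) (fun d => rfl)
    rw [← this]
    refine Finset.sum_congr rfl fun d _ => ?_
    rw [← GG_add]
    congr 1
    ring
  simp only [h2]
  rw [Finset.sum_comm]
  have h3 : ∀ d : ZMod p, d ≠ 0 → ∑ y : ZMod p, GG p (d ^ 2) * GG p ((2 * d) * y) = 0 := by
    intro d hd
    rw [← Finset.mul_sum, sum_GG_mul hp1 (mul_ne_zero (two_ne_zero' hodd) hd), mul_zero]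
  rw [Finset.sum_eq_single_of_mem (0 : ZMod p) (Finset.mem_univ _)
    (fun d _ hd => h3 d hd)]
  simp [GG_zero, zero_pow, Finset.card_univ, ZMod.card]

lemma gs_one_ne_zero (hodd : p ≠ 2) : gs p 1 ≠ 0 := by
  intro h
  have := gs_one_mul_conj (p := p) hodd
  rw [h, zero_mul] at this
  exact (Nat.cast_ne_zero.mpr (Fact.out : p.Prime).ne_zero) this.symm


lemma gaussSum'_eq (a : ℕ) : gaussSum' p a = gs p ((a : ℕ) : ZMod p) := by
  rw [gaussSum',
    sum_range_eq_sum_zmod (fun k => Complex.exp (2 * Real.pi * Complex.I * a * k ^ 2 / p))]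
  refine Finset.sum_congr rfl fun x _ => ?_
  have hx : ((x.val : ℕ) : ZMod p) = x := ZMod.natCast_rightInverse x
  have h1 : (a : ZMod p) * x ^ 2 = ((a * x.val ^ 2 : ℕ) : ZMod p) := by
    push_cast
    rw [hx]
  rw [h1, GG_natCast, FF_natCast, ee, ← Complex.exp_nat_mul]
  congr 1
  push_cast
  ring

lemma h2s_nat (hodd : p ≠ 2) : 2 * ((p - 1) / 2) = p - 1 := by
  have : Odd p := (Fact.out : p.Prime).odd_of_ne_two hodd
  obtain ⟨m, hm⟩ := this
  omega

lemma h2s_zmod (hodd : p ≠ 2) : 2 * ((((p - 1) / 2 : ℕ)) : ZMod p) = -1 := by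
  have h1 : ((2 * ((p - 1) / 2) : ℕ) : ZMod p) = ((p - 1 : ℕ) : ZMod p) := by
    rw [h2s_nat hodd]
  have hp1 : 1 ≤ p := (Fact.out : p.Prime).one_lt.le
  push_cast [Nat.cast_sub hp1] at h1
  rw [ZMod.natCast_self] at h1
  rw [h1]
  ring

lemma core (hodd : p ≠ 2) (x y : ZMod p) :
    ∑ z : ZMod p, GG p (x * (z - x)) * GG p ((((p - 1) / 2 : ℕ)) * (z - y) ^ 2)
      = gs p (((p - 1) / 2 : ℕ)) * GG p (-((((p - 1) / 2 : ℕ)) * y ^ 2))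
        * GG p ((((p - 1) / 2 : ℕ)) * (x - y) ^ 2) := by
  set ss : ZMod p := (((p - 1) / 2 : ℕ) : ZMod p) with hss
  have h2s : 2 * ss = -1 := h2s_zmod hodd
  have lhs_eq : ∑ z : ZMod p, GG p (x * (z - x)) * GG p (ss * (z - y) ^ 2)
      = ∑ w : ZMod p, GG p (ss * w ^ 2 + x * y + ss * x ^ 2) := by
    refine (Fintype.sum_equiv (Equiv.addLeft (x + y))
      (fun w => GG p (ss * w ^ 2 + x * y + ss * x ^ 2))
      (fun z => GG p (x * (z - x)) * GG p (ss * (z - y) ^ 2)) ?_).symm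
    intro w
    show GG p _ = GG p (x * ((x + y + w) - x)) * GG p (ss * ((x + y + w) - y) ^ 2)
    rw [← GG_add]
    congr 1
    linear_combination (-(x * w)) * h2s
  have rhs_eq : gs p ss * GG p (-(ss * y ^ 2)) * GG p (ss * (x - y) ^ 2)
      = ∑ w : ZMod p, GG p (ss * w ^ 2 + x * y + ss * x ^ 2) := by
    rw [gs, Finset.sum_mul, Finset.sum_mul]
    refine Finset.sum_congr rfl fun w _ => ?_
    rw [← GG_add, ← GG_add]
    congr 1
    linear_combination (-(x * y)) * h2s
  rw [lhs_eq, rhs_eq]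

lemma card_sq (hodd : p ≠ 2) :
    (Finset.image (fun x : ZMod p => x ^ 2) Finset.univ).card = (p + 1) / 2 := by
  classical
  set SQ := Finset.image (fun x : ZMod p => x ^ 2) Finset.univ with hSQ
  have hchar : ringChar (ZMod p) ≠ 2 := (ZMod.ringChar_zmod_n p).substr hodd
  have hfib : ∀ t : ZMod p, (Finset.univ.filter (fun x : ZMod p => x ^ 2 = t)).card
      = (quadraticChar (ZMod p) t + 1).toNat := by
    intro t
    have h := quadraticChar_card_sqrts hchar t
    have hset : {x : ZMod p | x ^ 2 = t}.toFinset
        = Finset.univ.filter (fun x => x ^ 2 = t) := Set.toFinset_setOf _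
    rw [hset] at h
    omega
  have hcount : p = ∑ t ∈ SQ, (Finset.univ.filter (fun x : ZMod p => x ^ 2 = t)).card := by
    rw [← Finset.card_eq_sum_card_fiberwise
      (fun x _ => Finset.mem_image_of_mem (fun x : ZMod p => x ^ 2) (Finset.mem_univ x))]
    rw [Finset.card_univ, ZMod.card]
  have h0 : (0 : ZMod p) ∈ SQ := by
    refine Finset.mem_image.mpr ⟨0, Finset.mem_univ _, by ring⟩
  have hfib0 : (Finset.univ.filter (fun x : ZMod p => x ^ 2 = (0:ZMod p))).card = 1 := by
    rw [hfib]; simp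
  have hfib2 : ∀ t ∈ SQ, t ≠ 0 →
      (Finset.univ.filter (fun x : ZMod p => x ^ 2 = t)).card = 2 := by
    intro t ht htne
    obtain ⟨y, _, hy⟩ := Finset.mem_image.mp ht
    have hyne : y ≠ 0 := by rintro rfl; rw [← hy] at htne; simp at htne
    rw [hfib, ← hy, quadraticChar_sq_one' hyne]
    rfl
  have hsum : ∑ t ∈ SQ, (Finset.univ.filter (fun x : ZMod p => x ^ 2 = t)).card
      = 1 + 2 * (SQ.card - 1) := by
    rw [← Finset.add_sum_erase _ _ h0, hfib0]
    congr 1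
    rw [Finset.sum_congr rfl (fun t ht => hfib2 t (Finset.mem_of_mem_erase ht)
      (Finset.ne_of_mem_erase ht)), Finset.sum_const, Finset.card_erase_of_mem h0,
      smul_eq_mul, Nat.mul_comm]
  have hcard1 : 1 ≤ SQ.card := Finset.card_pos.mpr ⟨0, h0⟩
  omega


lemma sum_fin_eq_sum_zmod (f : ZMod p → ℂ) :
    ∑ k : Fin p, f ((k : ℕ) : ZMod p) = ∑ z : ZMod p, f z := by
  refine Fintype.sum_bijective (fun k : Fin p => ((k : ℕ) : ZMod p)) ?_ _ _ (fun _ => rfl)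
  rw [Fintype.bijective_iff_injective_and_card]
  constructor
  · intro a b h
    have h2 := congrArg ZMod.val h
    rwa [ZMod.val_cast_of_lt a.isLt, ZMod.val_cast_of_lt b.isLt, ← Fin.ext_iff] at h2
  · rw [Fintype.card_fin, ZMod.card]

noncomputable def vv (p : ℕ) (a k : Fin p) : ℂ :=
  FF p ((((p - 1) / 2 : ℕ) : ℤ) * ((k : ℤ) - (a : ℤ)) ^ 2)

lemma eigen (hodd : p ≠ 2) (a : Fin p) :
    (Mmat p).mulVec (vv p a)
      = (gs p (((p - 1) / 2 : ℕ) : ZMod p)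
          * FF p (-((((p - 1) / 2 : ℕ) : ℤ) * (a : ℤ) ^ 2))) • vv p a := by
  funext j
  set c : Fin p → ZMod p := fun k => ((k : ℕ) : ZMod p) with hc
  set ss : ZMod p := (((p - 1) / 2 : ℕ) : ZMod p) with hss
  have hMv : ∀ k : Fin p, Mmat p j k * vv p a k
      = GG p (c j * (c k - c j)) * GG p (ss * (c k - c a) ^ 2) := by
    intro k
    show FF p ((j : ℤ) * ((k : ℤ) - (j : ℤ)))
      * FF p ((((p - 1) / 2 : ℕ) : ℤ) * ((k : ℤ) - (a : ℤ)) ^ 2) = _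
    rw [← GG_intCast, ← GG_intCast]
    congr 2 <;>
      simp only [Int.cast_mul, Int.cast_sub, Int.cast_pow, Int.cast_natCast, Int.cast_neg] <;> rfl
  show ∑ k : Fin p, Mmat p j k * vv p a k = _
  rw [Finset.sum_congr rfl (fun k _ => hMv k)]
  rw [sum_fin_eq_sum_zmod (fun z => GG p (c j * (z - c j)) * GG p (ss * (z - c a) ^ 2))]
  rw [core hodd (c j) (c a)]
  simp only [Pi.smul_apply, smul_eq_mul, vv]
  rw [mul_assoc, mul_assoc]
  congr 1
  rw [← GG_intCast, ← GG_intCast, ← GG_add, ← GG_add]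
  congr 1
  simp only [Int.cast_add, Int.cast_neg, Int.cast_mul, Int.cast_pow, Int.cast_sub,
    Int.cast_natCast]
  rfl


noncomputable def PP (p : ℕ) : Matrix (Fin p) (Fin p) ℂ := fun k a => vv p a k

lemma FF_ne_zero (n : ℤ) : FF p n ≠ 0 := zpow_ne_zero n ee_ne_zero

lemma h2s_int (hodd : p ≠ 2) : 2 * (((p - 1) / 2 : ℕ) : ℤ) = (p : ℤ) - 1 := by
  have h := h2s_nat (p := p) hodd
  have hp1 : 1 ≤ p := (Fact.out : p.Prime).one_lt.le
  omega

lemma PP_det_ne_zero (hodd : p ≠ 2) : (PP p).det ≠ 0 := by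
  have h2sZ := h2s_int (p := p) hodd
  have hfac : PP p
      = Matrix.diagonal (fun k : Fin p => FF p ((((p - 1) / 2 : ℕ) : ℤ) * (k : ℤ) ^ 2))
        * ((Matrix.vandermonde (fun a : Fin p => ee p ^ (a : ℕ)))ᵀ
          * Matrix.diagonal (fun a : Fin p => FF p ((((p - 1) / 2 : ℕ) : ℤ) * (a : ℤ) ^ 2))) := by
    ext k a
    rw [Matrix.diagonal_mul, Matrix.mul_diagonal, Matrix.transpose_apply,
      Matrix.vandermonde_apply]
    show FF p _ = _
    have hw : (ee p ^ (a : ℕ)) ^ (k : ℕ) = FF p ((a : ℤ) * (k : ℤ)) := by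
      rw [← pow_mul, ← FF_natCast]
      congr 1
    rw [hw, ← FF_add, ← FF_add]
    refine FF_cong (NeZero.ne p) ⟨-((a : ℤ) * (k : ℤ)), ?_⟩
    linear_combination (-((a : ℤ) * (k : ℤ))) * h2sZ
  rw [hfac, Matrix.det_mul, Matrix.det_mul, Matrix.det_diagonal, Matrix.det_transpose,
    Matrix.det_vandermonde]
  refine mul_ne_zero ?_ (mul_ne_zero ?_ ?_)
  · exact Finset.prod_ne_zero_iff.mpr fun k _ => FF_ne_zero _
  · refine Finset.prod_ne_zero_iff.mpr fun i _ => ?_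
    refine Finset.prod_ne_zero_iff.mpr fun j hj => ?_
    refine sub_ne_zero_of_ne fun h => ?_
    have h2 := (hprim (NeZero.ne p)).pow_inj j.isLt i.isLt h
    have hij : i < j := Finset.mem_Ioi.mp hj
    rw [Fin.lt_iff_val_lt_val] at hij
    omega
  · exact Finset.prod_ne_zero_iff.mpr fun k _ => FF_ne_zero _

lemma MP_eq (hodd : p ≠ 2) :
    Mmat p * PP p = PP p * Matrix.diagonal (fun a : Fin p =>
      gs p (((p - 1) / 2 : ℕ) : ZMod p) * FF p (-((((p - 1) / 2 : ℕ) : ℤ) * (a : ℤ) ^ 2))) := by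
  ext j a
  rw [Matrix.mul_diagonal]
  have h1 : (Mmat p * PP p) j a = ((Mmat p).mulVec (vv p a)) j := by
    rw [Matrix.mul_apply]
    rfl
  rw [h1, eigen hodd a]
  simp only [Pi.smul_apply, smul_eq_mul]
  show _ = PP p j a * _
  rw [PP]
  ring


lemma fin_cast_bijective : Function.Bijective (fun k : Fin p => ((k : ℕ) : ZMod p)) := by
  rw [Fintype.bijective_iff_injective_and_card]
  constructor
  · intro a b h
    have h2 := congrArg ZMod.val h
    rwa [ZMod.val_cast_of_lt a.isLt, ZMod.val_cast_of_lt b.isLt, ← Fin.ext_iff] at h2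
  · rw [Fintype.card_fin, ZMod.card]

lemma ss_ne_zero (hodd : p ≠ 2) : (((p - 1) / 2 : ℕ) : ZMod p) ≠ 0 := by
  intro h
  have hd := (ZMod.natCast_eq_zero_iff _ p).mp h
  have hp2 : 2 ≤ p := (Fact.out : p.Prime).two_le
  have hle := Nat.le_of_dvd (by omega) hd
  omega

lemma quadChar_ne_zero' {u : ZMod p} (hu : u ≠ 0) : quadraticChar (ZMod p) u ≠ 0 := by
  have h3 : quadraticChar (ZMod p) u * quadraticChar (ZMod p) u = 1 := by
    rw [← pow_two]; exact quadraticChar_sq_one hu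
  intro h; rw [h, zero_mul] at h3; exact one_ne_zero h3.symm

lemma neg_two_ne_zero (hodd : p ≠ 2) : (-2 : ZMod p) ≠ 0 := by
  intro h; apply two_ne_zero' (p := p) hodd; linear_combination -h

lemma legendre_eq (hodd : p ≠ 2) :
    legendreSym p (-2) = quadraticChar (ZMod p) (((p - 1) / 2 : ℕ) : ZMod p) := by
  have h2 : ((-2 : ℤ) : ZMod p) = (-2 : ZMod p) := by push_cast; ring
  have hprod : (-2 : ZMod p) * (((p - 1) / 2 : ℕ) : ZMod p) = 1 := by
    linear_combination (-1 : ZMod p) * h2s_zmod (p := p) hodd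
  have hmul : quadraticChar (ZMod p) (-2 : ZMod p)
      * quadraticChar (ZMod p) (((p - 1) / 2 : ℕ) : ZMod p) = 1 := by
    rw [← _root_.map_mul, hprod, _root_.map_one]
  have hsq : quadraticChar (ZMod p) (-2 : ZMod p) * quadraticChar (ZMod p) (-2 : ZMod p) = 1 := by
    rw [← pow_two]; exact quadraticChar_sq_one (neg_two_ne_zero hodd)
  have hc := mul_left_cancel₀ (quadChar_ne_zero' (neg_two_ne_zero hodd)) (hsq.trans hmul.symm)
  rw [legendreSym, h2]
  exact hc

lemma gs_ss_eq (hodd : p ≠ 2) :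
    gs p (((p - 1) / 2 : ℕ) : ZMod p) = (legendreSym p (-2) : ℂ) * gaussSum' p 1 := by
  rw [gs_shift hodd (ss_ne_zero hodd)]
  congr 1
  · exact_mod_cast congrArg (fun z : ℤ => (z : ℂ)) (legendre_eq (p := p) hodd).symm
  · rw [gaussSum'_eq 1, Nat.cast_one]

lemma gs_ss_ne_zero (hodd : p ≠ 2) : gs p (((p - 1) / 2 : ℕ) : ZMod p) ≠ 0 := by
  rw [gs_shift hodd (ss_ne_zero hodd)]
  exact mul_ne_zero (Int.cast_ne_zero.mpr (quadChar_ne_zero' (ss_ne_zero hodd)))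
    (gs_one_ne_zero hodd)

lemma lam_eq_GG (a : Fin p) :
    FF p (-((((p - 1) / 2 : ℕ) : ℤ) * (a : ℤ) ^ 2))
      = GG p (-((((p - 1) / 2 : ℕ) : ZMod p) * (((a : ℕ) : ZMod p)) ^ 2)) := by
  rw [← GG_intCast]
  congr 1
  simp only [Int.cast_neg, Int.cast_mul, Int.cast_pow, Int.cast_natCast]

lemma count_eigen (hodd : p ≠ 2) :
    (Finset.image (fun a : Fin p => gs p (((p - 1) / 2 : ℕ) : ZMod p)
        * FF p (-((((p - 1) / 2 : ℕ) : ℤ) * (a : ℤ) ^ 2))) Finset.univ).card = (p + 1) / 2 := by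
  have hC : gs p (((p - 1) / 2 : ℕ) : ZMod p) ≠ 0 := gs_ss_ne_zero hodd
  have h1 : (fun a : Fin p => gs p (((p - 1) / 2 : ℕ) : ZMod p)
        * FF p (-((((p - 1) / 2 : ℕ) : ℤ) * (a : ℤ) ^ 2)))
      = (fun x : ZMod p => gs p (((p - 1) / 2 : ℕ) : ZMod p)
          * GG p (-((((p - 1) / 2 : ℕ) : ZMod p) * x ^ 2)))
        ∘ (fun k : Fin p => ((k : ℕ) : ZMod p)) := by
    funext a
    simp only [Function.comp_apply]
    rw [lam_eq_GG]
  rw [h1, ← Finset.image_image, Finset.image_univ_of_surjective fin_cast_bijective.surjective]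
  have h2 : (fun x : ZMod p => gs p (((p - 1) / 2 : ℕ) : ZMod p)
          * GG p (-((((p - 1) / 2 : ℕ) : ZMod p) * x ^ 2)))
      = (fun t : ZMod p => gs p (((p - 1) / 2 : ℕ) : ZMod p)
          * GG p (-((((p - 1) / 2 : ℕ) : ZMod p) * t))) ∘ (fun x : ZMod p => x ^ 2) := rfl
  rw [h2, ← Finset.image_image, Finset.card_image_of_injective _ ?_, card_sq hodd]
  intro t t' h
  have h3 := GG_injective (mul_left_cancel₀ hC h)
  have h4 := neg_injective h3
  exact mul_left_cancel₀ (ss_ne_zero hodd) h4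

end prime
end MmatAux

open MmatAux

/-- Let `p` be an odd prime, `ζ = e^{2πi/p}`, `s = (p−1)/2`.  A complex number `λ` is an
eigenvalue of `M(p)` iff `λ = ((−2)/p)·g(1;p)·ζ^{−sa²}` for some `0 ≤ a ≤ p−1`; the number
of distinct eigenvalues is `(p+1)/2`; and for each `0 ≤ a ≤ p−1` the vector `v_a` with
`k`-entry `ζ^{s(k−a)²}` is an eigenvector of `M(p)` with eigenvalue `g(s;p)·ζ^{−sa²}`. -/
theorem Mmat_eigenvalues (p : ℕ) [Fact p.Prime] (hodd : p ≠ 2) :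
    (∀ lam : ℂ,
      (∃ v : Fin p → ℂ, v ≠ 0 ∧ (Mmat p).mulVec v = lam • v) ↔
      (∃ a ∈ Finset.range p, lam = (legendreSym p (-2) : ℂ) * gaussSum' p 1 *
        Complex.exp (2 * Real.pi * Complex.I / p) ^ (-((((p - 1) / 2 : ℕ) : ℤ) * (a : ℤ) ^ 2)))) ∧
    Set.ncard {lam : ℂ | ∃ v : Fin p → ℂ, v ≠ 0 ∧ (Mmat p).mulVec v = lam • v} = (p + 1) / 2 ∧
    (∀ a : Fin p,
      (fun k : Fin p => Complex.exp (2 * Real.pi * Complex.I / p) ^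
          ((((p - 1) / 2 : ℕ) : ℤ) * ((k : ℤ) - (a : ℤ)) ^ 2)) ≠ 0 ∧
      (Mmat p).mulVec
        (fun k : Fin p => Complex.exp (2 * Real.pi * Complex.I / p) ^
          ((((p - 1) / 2 : ℕ) : ℤ) * ((k : ℤ) - (a : ℤ)) ^ 2)) =
        (gaussSum' p ((p - 1) / 2) *
          Complex.exp (2 * Real.pi * Complex.I / p) ^ (-((((p - 1) / 2 : ℕ) : ℤ) * (a : ℤ) ^ 2))) •
        (fun k : Fin p => Complex.exp (2 * Real.pi * Complex.I / p) ^
          ((((p - 1) / 2 : ℕ) : ℤ) * ((k : ℤ) - (a : ℤ)) ^ 2))) := by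
  haveI : NeZero p := ⟨(Fact.out : p.Prime).ne_zero⟩
  -- the eigenvector family
  have hvne : ∀ a : Fin p, vv p a ≠ 0 := by
    intro a h
    have h2 := congrFun h a
    simp only [vv, FF, Pi.zero_apply, sub_self] at h2
    norm_num at h2
  -- master equivalence
  have master : ∀ l : ℂ,
      (∃ v : Fin p → ℂ, v ≠ 0 ∧ (Mmat p).mulVec v = l • v) ↔
      (∃ b : Fin p, l = gs p (((p - 1) / 2 : ℕ) : ZMod p)
        * FF p (-((((p - 1) / 2 : ℕ) : ℤ) * (b : ℤ) ^ 2))) := by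
    intro l
    constructor
    · rintro ⟨v, hv0, hv⟩
      have hU : IsUnit (PP p).det := isUnit_iff_ne_zero.mpr (PP_det_ne_zero hodd)
      set w := (PP p)⁻¹.mulVec v with hwdef
      have hPw : (PP p).mulVec w = v := by
        rw [hwdef, Matrix.mulVec_mulVec, Matrix.mul_nonsing_inv _ hU, Matrix.one_mulVec]
      have hw0 : w ≠ 0 := by
        intro h
        apply hv0
        rw [← hPw, h, Matrix.mulVec_zero]
      have hDw : (Matrix.diagonal (fun a : Fin p => gs p (((p - 1) / 2 : ℕ) : ZMod p)
          * FF p (-((((p - 1) / 2 : ℕ) : ℤ) * (a : ℤ) ^ 2)))).mulVec w = l • w := by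
        have h1 : (PP p).mulVec ((Matrix.diagonal (fun a : Fin p =>
            gs p (((p - 1) / 2 : ℕ) : ZMod p)
            * FF p (-((((p - 1) / 2 : ℕ) : ℤ) * (a : ℤ) ^ 2)))).mulVec w)
            = (PP p).mulVec (l • w) := by
          rw [Matrix.mulVec_mulVec, ← MP_eq hodd, ← Matrix.mulVec_mulVec, hPw, hv, ← hPw,
            Matrix.mulVec_smul]
        have hinj : Function.Injective ((PP p).mulVec) := by
          intro x y h
          have h2 := congrArg ((PP p)⁻¹.mulVec) h
          rwa [Matrix.mulVec_mulVec, Matrix.nonsing_inv_mul _ hU, Matrix.one_mulVec,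
            Matrix.mulVec_mulVec, Matrix.nonsing_inv_mul _ hU, Matrix.one_mulVec] at h2
        exact hinj h1
      obtain ⟨b, hb⟩ := Function.ne_iff.mp hw0
      refine ⟨b, ?_⟩
      have h3 := congrFun hDw b
      rw [Matrix.mulVec_diagonal] at h3
      have h4 : (l • w) b = l * w b := rfl
      rw [h4] at h3
      exact (mul_right_cancel₀ hb h3).symm
    · rintro ⟨b, rfl⟩
      exact ⟨vv p b, hvne b, eigen hodd b⟩
  refine ⟨?_, ?_, ?_⟩
  · -- first bullet
    intro l
    rw [master l]
    constructor
    · rintro ⟨b, rfl⟩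
      refine ⟨(b : ℕ), Finset.mem_range.mpr b.isLt, ?_⟩
      rw [gs_ss_eq hodd]
      rfl
    · rintro ⟨a, ha, rfl⟩
      refine ⟨⟨a, Finset.mem_range.mp ha⟩, ?_⟩
      rw [gs_ss_eq hodd]
      rfl
  · -- count
    have hEq : {lam : ℂ | ∃ v : Fin p → ℂ, v ≠ 0 ∧ (Mmat p).mulVec v = lam • v}
        = ↑(Finset.image (fun a : Fin p => gs p (((p - 1) / 2 : ℕ) : ZMod p)
            * FF p (-((((p - 1) / 2 : ℕ) : ℤ) * (a : ℤ) ^ 2))) Finset.univ) := by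
      ext l
      rw [Set.mem_setOf_eq, master l]
      simp only [Finset.coe_image, Set.mem_image, Finset.mem_coe, Finset.coe_univ,
        Set.mem_univ, true_and]
      exact ⟨fun ⟨b, hb⟩ => ⟨b, hb.symm⟩, fun ⟨b, hb⟩ => ⟨b, hb.symm⟩⟩
    rw [hEq, Set.ncard_coe_finset, count_eigen hodd]
  · -- third bullet
    intro a
    constructor
    · exact hvne a
    · show (Mmat p).mulVec (vv p a)
        = (gaussSum' p ((p - 1) / 2) * FF p (-((((p - 1) / 2 : ℕ) : ℤ) * (a : ℤ) ^ 2))) • vv p a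
      rw [gaussSum'_eq ((p - 1) / 2)]
      exact eigen hodd a
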